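/- arXiv:1406.2186 — 2 statements merged into one kernel-verified Lean document; each statement's English description precedes it below -/
import Mathlib

section
/- Efron–Stein inequality: if Z = (Z_1,…,Z_n) has independent coordinates, Z' is an independent copy of Z, and f:𝒵^n→ℝ satisfies E[f(Z)²] < ∞, then Var(f(Z)) ≤ (1/2) Σ_{j=1}^n E[|Δ_j f(Z)|²], where Δ_j f(Z) = f(Z^j) − f(Z) and Z^j is Z with its j-th coordinate replaced by Z'_j. -/
/-!
Let `π` be the law of `Z` and realize `(Z, Z')` as `(x, y) ∼ π ⊗ π`. Since `π` is a product
measure, exchanging the coordinates in a set `s` between `x` and `y` (`swapOn s`) preserves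
`π ⊗ π`. Now `Var f = E[f(x) (f(x) - f(y))]`, and moving the coordinates of `y` into `x` one at a
time telescopes this into terms `E[f(x) b]`, where `b` is the change of `f` when coordinate `j`
is moved. Exchanging the `j`-th coordinates flips the sign of `b` and turns `f(x)` into `f(x^j)`,
so `E[f(x) b] = -½ E[a b]` with `a = f(x^j) - f(x)`; and `b` has the law of `-a` (transport by
`swapOn s`), so `-ab ≤ (a² + b²) / 2` bounds the term by `½ E[a²]`.
-/

open MeasureTheory ProbabilityTheory Finset

namespace EfronStein

lemma variance_eq_integral_prod_mul_sub {β : Type*} [MeasurableSpace β] {μ : Measure β}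
    [IsProbabilityMeasure μ] {f : β → ℝ} (hf : MemLp f 2 μ) :
    variance f μ = ∫ θ, f θ.1 * (f θ.1 - f θ.2) ∂(μ.prod μ) := by
  have hff : Integrable (fun θ : β × β => f θ.1 * f θ.1) (μ.prod μ) :=
    (hf.comp_fst μ).integrable_mul (hf.comp_fst μ)
  have hfg : Integrable (fun θ : β × β => f θ.1 * f θ.2) (μ.prod μ) :=
    (hf.comp_fst μ).integrable_mul (hf.comp_snd μ)
  simp_rw [mul_sub]
  rw [integral_sub hff hfg, integral_prod_mul, integral_fun_fst (fun x => f x * f x),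
    variance_eq_sub hf]
  simp [sq]

variable {ι α : Type*} [DecidableEq ι]

def swapOn (s : Finset ι) (θ : (ι → α) × (ι → α)) : (ι → α) × (ι → α) :=
  (s.piecewise θ.2 θ.1, s.piecewise θ.1 θ.2)

lemma swapOn_swapOn (s t : Finset ι) (θ : (ι → α) × (ι → α)) :
    swapOn s (swapOn t θ) = swapOn (symmDiff s t) θ := by
  ext i <;> by_cases hs : i ∈ s <;> by_cases ht : i ∈ t <;>
    simp [swapOn, piecewise, mem_symmDiff, hs, ht]

@[simp] lemma swapOn_empty (θ : (ι → α) × (ι → α)) : swapOn ∅ θ = θ := by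
  simp [swapOn]

lemma swapOn_univ [Fintype ι] (θ : (ι → α) × (ι → α)) : swapOn univ θ = θ.swap := by
  simp [swapOn, Prod.swap]

lemma fst_swapOn_singleton (j : ι) (θ : (ι → α) × (ι → α)) :
    (swapOn {j} θ).1 = Function.update θ.1 j (θ.2 j) :=
  piecewise_singleton _ _ _

lemma swapOn_involutive (s : Finset ι) : Function.Involutive (swapOn (α := α) s) := fun θ => by
  rw [swapOn_swapOn, symmDiff_self, bot_eq_empty, swapOn_empty]

variable [MeasurableSpace α]

lemma measurable_swapOn (s : Finset ι) : Measurable (swapOn (α := α) s) := by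
  refine (measurable_pi_lambda _ fun i => ?_).prodMk (measurable_pi_lambda _ fun i => ?_) <;>
    by_cases hi : i ∈ s <;> simp only [piecewise, hi, if_true, if_false] <;> fun_prop

lemma measurableEmbedding_swapOn (s : Finset ι) : MeasurableEmbedding (swapOn (α := α) s) :=
  (MeasurableEquiv.ofInvolutive _ (swapOn_involutive s) (measurable_swapOn s)).measurableEmbedding

variable [Fintype ι]

lemma measurePreserving_swapOn (ν : ι → Measure α) [∀ i, SigmaFinite (ν i)] (s : Finset ι) :
    MeasurePreserving (swapOn s) ((Measure.pi ν).prod (Measure.pi ν))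
      ((Measure.pi ν).prod (Measure.pi ν)) := by
  let e := MeasurableEquiv.arrowProdEquivProdArrow α α ι
  have he := measurePreserving_arrowProdEquivProdArrow α α ι ν ν
  have hswap : MeasurePreserving (fun (z : ι → α × α) i => if i ∈ s then (z i).swap else z i)
      (Measure.pi fun i => (ν i).prod (ν i)) (Measure.pi fun i => (ν i).prod (ν i)) := by
    refine measurePreserving_pi (f := fun i (z : α × α) => if i ∈ s then z.swap else z) _ _
      fun i => ?_
    by_cases hi : i ∈ s
    · simpa only [hi, if_true] using Measure.measurePreserving_swap
    · simp only [hi, if_false]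
      exact MeasurePreserving.id _
  have h_conj : swapOn s = e ∘ (fun z i => if i ∈ s then (z i).swap else z i) ∘ e.symm := by
    ext θ i <;> by_cases hi : i ∈ s <;>
      simp [swapOn, e, hi, piecewise, MeasurableEquiv.arrowProdEquivProdArrow]
  rw [h_conj]
  exact he.comp (hswap.comp he.symm)

section Pi

variable (ν : ι → Measure α) [∀ i, IsProbabilityMeasure (ν i)] {f : (ι → α) → ℝ}

local notation "P" => Measure.prod (Measure.pi ν) (Measure.pi ν)

lemma memLp_comp_fst_swapOn (hf : MemLp f 2 (Measure.pi ν)) (s : Finset ι) :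
    MemLp (fun θ => f (swapOn s θ).1) 2 P :=
  hf.comp_measurePreserving (measurePreserving_fst.comp (measurePreserving_swapOn ν s))

lemma integrable_mul_sub_swapOn (hf : MemLp f 2 (Measure.pi ν)) (s t : Finset ι) :
    Integrable (fun θ => f θ.1 * (f (swapOn s θ).1 - f (swapOn t θ).1)) P :=
  (hf.comp_fst _).integrable_mul
    ((memLp_comp_fst_swapOn ν hf s).sub (memLp_comp_fst_swapOn ν hf t))

lemma integral_mul_sub_swapOn_insert_le (hf : MemLp f 2 (Measure.pi ν)) {j : ι} {s : Finset ι}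
    (hj : j ∉ s) :
    ∫ θ, f θ.1 * (f (swapOn s θ).1 - f (swapOn (insert j s) θ).1) ∂P ≤
      1 / 2 * ∫ θ, (f (swapOn {j} θ).1 - f θ.1) ^ 2 ∂P := by
  set a := fun θ => f (swapOn {j} θ).1 - f θ.1 with ha_def
  set b := fun θ => f (swapOn s θ).1 - f (swapOn (insert j s) θ).1 with hb_def
  have h_ins : symmDiff s {j} = insert j s := by
    ext i; by_cases hi : i = j <;> simp [mem_symmDiff, hi, hj]
  have h_del : symmDiff (insert j s) {j} = s := by
    ext i; by_cases hi : i = j <;> simp [mem_symmDiff, hi, hj]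
  have h_ins' : symmDiff {j} s = insert j s := by rw [symmDiff_comm, h_ins]
  have hb_swap : ∀ θ, b (swapOn {j} θ) = - b θ := fun θ => by
    simp only [hb_def, swapOn_swapOn, h_ins, h_del]; ring
  have hb_eq : ∀ θ, b θ = - a (swapOn s θ) := fun θ => by
    simp only [ha_def, hb_def, swapOn_swapOn, h_ins']; ring
  have ha : MemLp a 2 P := (memLp_comp_fst_swapOn ν hf {j}).sub (hf.comp_fst _)
  have hb : MemLp b 2 P := (memLp_comp_fst_swapOn ν hf s).sub (memLp_comp_fst_swapOn ν hf _)
  have hb_sq : ∫ θ, b θ ^ 2 ∂P = ∫ θ, a θ ^ 2 ∂P := by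
    simp only [hb_eq, neg_sq]
    exact (measurePreserving_swapOn ν s).integral_comp (measurableEmbedding_swapOn s) (a · ^ 2)
  have hfb : Integrable (fun θ => f θ.1 * b θ) P := integrable_mul_sub_swapOn ν hf _ _
  have hfb_swap : Integrable (fun θ => f (swapOn {j} θ).1 * b (swapOn {j} θ)) P := by
    simpa only [hb_swap, mul_neg, Pi.neg_def, Pi.mul_def] using
      ((memLp_comp_fst_swapOn ν hf {j}).integrable_mul hb).neg
  have h_symm : 2 * ∫ θ, f θ.1 * b θ ∂P = - ∫ θ, a θ * b θ ∂P := by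
    calc 2 * ∫ θ, f θ.1 * b θ ∂P
        = ∫ θ, f θ.1 * b θ ∂P + ∫ θ, f (swapOn {j} θ).1 * b (swapOn {j} θ) ∂P := by
          rw [(measurePreserving_swapOn ν {j}).integral_comp (measurableEmbedding_swapOn {j})
            (fun θ => f θ.1 * b θ)]
          ring
      _ = ∫ θ, -(a θ * b θ) ∂P := by
          rw [← integral_add hfb hfb_swap]
          congr with θ
          rw [hb_swap, ha_def]; ring
      _ = _ := integral_neg _
  have h_amgm : - ∫ θ, a θ * b θ ∂P ≤ (∫ θ, a θ ^ 2 ∂P + ∫ θ, b θ ^ 2 ∂P) / 2 := by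
    rw [← integral_neg, ← integral_add ha.integrable_sq hb.integrable_sq, ← integral_div]
    refine integral_mono (ha.integrable_mul hb).neg
      ((ha.integrable_sq.add hb.integrable_sq).div_const 2) fun θ => ?_
    nlinarith [sq_nonneg (a θ + b θ)]
  linarith

lemma integral_mul_sub_swapOn_le (hf : MemLp f 2 (Measure.pi ν)) (s : Finset ι) :
    ∫ θ, f θ.1 * (f θ.1 - f (swapOn s θ).1) ∂P ≤
      1 / 2 * ∑ j ∈ s, ∫ θ, (f (swapOn {j} θ).1 - f θ.1) ^ 2 ∂P := by
  induction s using Finset.induction_on with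
  | empty => simp
  | insert j s hj ih =>
    have hsplit : ∫ θ, f θ.1 * (f θ.1 - f (swapOn (insert j s) θ).1) ∂P =
        ∫ θ, f θ.1 * (f θ.1 - f (swapOn s θ).1) ∂P +
          ∫ θ, f θ.1 * (f (swapOn s θ).1 - f (swapOn (insert j s) θ).1) ∂P := by
      rw [← integral_add (by simpa using integrable_mul_sub_swapOn ν hf ∅ s)
        (integrable_mul_sub_swapOn ν hf s _)]
      congr with θ
      ring
    rw [hsplit, sum_insert hj, mul_add]
    linarith [integral_mul_sub_swapOn_insert_le ν hf hj]

theorem variance_pi_le_sum_integral_update (hf : MemLp f 2 (Measure.pi ν)) :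
    variance f (Measure.pi ν) ≤
      1 / 2 * ∑ j, ∫ θ, (f (Function.update θ.1 j (θ.2 j)) - f θ.1) ^ 2 ∂P := by
  rw [variance_eq_integral_prod_mul_sub hf]
  simpa [swapOn_univ, fst_swapOn_singleton] using integral_mul_sub_swapOn_le ν hf univ

end Pi

end EfronStein

/-- Efron–Stein inequality: if `Z = (Z_1,…,Z_n)` has independent coordinates,
`Z'` is an independent copy of `Z`, and `f(Z)` is square integrable, then
`Var(f(Z)) ≤ (1/2) ∑_j E[(f(Z^j) - f(Z))^2]`, where `Z^j` replaces the `j`-th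
coordinate of `Z` by `Z'_j`. -/
theorem efron_stein {Ω 𝓩 : Type*} [MeasurableSpace Ω] [MeasurableSpace 𝓩]
    (μ : Measure Ω) [IsProbabilityMeasure μ] {n : ℕ}
    (Z Z' : Ω → (Fin n → 𝓩))
    (hZmeas : Measurable Z) (hZ'meas : Measurable Z')
    (hcoordindep : iIndepFun
      (fun j ω => Z ω j) μ)
    (hindep : IndepFun Z Z' μ)
    (hcopy : Measure.map Z μ = Measure.map Z' μ)
    (f : (Fin n → 𝓩) → ℝ) (hf : Measurable f)
    (hL2 : MemLp (fun ω => f (Z ω)) 2 μ) :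
    variance (fun ω => f (Z ω)) μ ≤
      (1/2) * ∑ j : Fin n,
        ∫ ω, (f (Function.update (Z ω) j (Z' ω j)) - f (Z ω))^2 ∂μ := by
  let ν j := μ.map (Z · j)
  have hZj j : AEMeasurable (Z · j) μ :=
    (measurable_pi_apply j).comp_aemeasurable hZmeas.aemeasurable
  have (j : Fin n) : IsProbabilityMeasure (ν j) := Measure.isProbabilityMeasure_map (hZj j)
  have hZ : μ.map Z = Measure.pi ν := (iIndepFun_iff_map_fun_eq_pi_map hZj).1 hcoordindep
  have hZZ' : μ.map (fun ω => (Z ω, Z' ω)) = (Measure.pi ν).prod (Measure.pi ν) := by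
    rw [(indepFun_iff_map_prod_eq_prod_map_map hZmeas.aemeasurable hZ'meas.aemeasurable).1 hindep,
      ← hcopy, hZ]
  have hfπ : MemLp f 2 (Measure.pi ν) := by
    rw [← hZ]
    exact (memLp_map_measure_iff hf.aestronglyMeasurable hZmeas.aemeasurable).2 hL2
  have hvar : variance (fun ω => f (Z ω)) μ = variance f (Measure.pi ν) := by
    rw [← hZ, variance_map hf.aemeasurable hZmeas.aemeasurable]
    rfl
  have hterm (j : Fin n) : ∫ ω, (f (Function.update (Z ω) j (Z' ω j)) - f (Z ω))^2 ∂μ =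
      ∫ θ, (f (Function.update θ.1 j (θ.2 j)) - f θ.1) ^ 2
        ∂(Measure.pi ν).prod (Measure.pi ν) := by
    rw [← hZZ', integral_map (hZmeas.prodMk hZ'meas).aemeasurable (by fun_prop)]
  rw [hvar, sum_congr rfl fun j _ => hterm j]
  exact EfronStein.variance_pi_le_sum_integral_update ν hfπ
end

section
/- Chatterjee's covariance identity: for square-integrable functions g, f:𝒵^n→ℝ of independent coordinates Z, Cov(g(Z), f(Z)) = (1/2) Σ_{j=1}^n Σ_{A ⊂ [n], j ∉ A} K_{n,A} E[Δ_j g(Z) · Δ_j f(Z^A)], where K_{n,A} = |A|!(n−|A|−1)!/n!. -/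
/-!
Write `c B = E[g(Z) f(Z^B)]`, so that `c ∅ = E[g(Z) f(Z)]` and `c univ = E[g(Z)] E[f(Z)]`.
Exchanging the `j`-th coordinates of `Z` and `Z'` does not change the joint law of `(Z, Z')`;
it turns `Z^{j}` into `Z` and `Z^A` into `Z^{A ∆ {j}}`, whence for `j ∉ A`
`E[Δ_j g(Z) Δ_j f(Z^A)] = 2 (c A - c (A ∪ {j}))`.
The Shapley weights `K_{n,A}` make the marginal contributions `c (A ∪ {j}) - c A` telescope to
`c univ - c ∅` (efficiency of the Shapley value), since every coalition `B` other than `∅` and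
`univ` enters with total weight `|B| K_{n,|B|-1} - (n - |B|) K_{n,|B|} = 0`.
-/

open MeasureTheory ProbabilityTheory Finset

-- At `k = n` the truncated subtraction makes `(n - k - 1)! = 1`; that value is never weighted.
noncomputable def shapleyWeight (n k : ℕ) : ℝ :=
  ((k.factorial * (n - k - 1).factorial : ℕ) : ℝ) / n.factorial

lemma natCast_mul_shapleyWeight_pred {n k : ℕ} (hk : 0 < k) (hkn : k ≤ n) :
    k * shapleyWeight n (k - 1) = ((n.choose k : ℕ) : ℝ)⁻¹ := by
  obtain ⟨k, rfl⟩ := Nat.exists_eq_add_one_of_ne_zero hk.ne'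
  rw [shapleyWeight, Nat.cast_choose ℝ hkn, inv_div, Nat.add_sub_cancel,
    show n - k - 1 = n - (k + 1) by omega, Nat.factorial_succ]
  push_cast
  ring

lemma natCast_sub_mul_shapleyWeight {n k : ℕ} (hkn : k < n) :
    ((n - k : ℕ) : ℝ) * shapleyWeight n k = ((n.choose k : ℕ) : ℝ)⁻¹ := by
  obtain ⟨m, hm⟩ := Nat.exists_eq_add_one_of_ne_zero (Nat.sub_ne_zero_of_lt hkn)
  rw [shapleyWeight, Nat.cast_choose ℝ hkn.le, inv_div, hm, Nat.add_sub_cancel,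
    Nat.factorial_succ]
  push_cast
  ring

lemma natCast_mul_shapleyWeight_pred_sub {n k : ℕ} (hkn : k ≤ n) :
    k * shapleyWeight n (k - 1) - ((n - k : ℕ) : ℝ) * shapleyWeight n k =
      (if k = n then 1 else 0) - (if k = 0 then 1 else 0) := by
  rcases Nat.eq_zero_or_pos k with rfl | hk
  · rcases Nat.eq_zero_or_pos n with rfl | hn
    · simp
    · have h := natCast_sub_mul_shapleyWeight hn
      simp_all [hn.ne]
  · rcases hkn.lt_or_eq with hkn | rfl
    · rw [natCast_mul_shapleyWeight_pred hk hkn.le, natCast_sub_mul_shapleyWeight hkn]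
      simp [hkn.ne, hk.ne']
    · simp [natCast_mul_shapleyWeight_pred hk le_rfl, hk.ne']

section Coalitions

variable {ι : Type*} [Fintype ι] [DecidableEq ι]

lemma sum_sum_notMem_insert (F : ℕ → Finset ι → ℝ) :
    ∑ j, ∑ A ∈ univ.powerset.filter (fun A => j ∉ A), F #A (insert j A) =
      ∑ B : Finset ι, #B * F (#B - 1) B := by
  have hj : ∀ j, ∑ A ∈ univ.powerset.filter (fun A => j ∉ A), F #A (insert j A) =
      ∑ B ∈ univ.filter (fun B => j ∈ B), F (#B - 1) B := by
    intro j
    refine sum_nbij' (insert j) (fun B => B.erase j) ?_ ?_ ?_ ?_ ?_ <;> intro A hA <;>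
      simp_all [card_insert_of_notMem]
  simp_rw [hj]
  rw [sum_comm' (t' := univ) (s' := id) (by simp)]
  simp

lemma sum_sum_notMem (F : Finset ι → ℝ) :
    ∑ j, ∑ A ∈ univ.powerset.filter (fun A => j ∉ A), F A =
      ∑ A : Finset ι, ((Fintype.card ι - #A : ℕ) : ℝ) * F A := by
  rw [sum_comm' (t' := univ) (s' := fun A => Aᶜ) (by simp)]
  simp [card_compl]

theorem sum_shapleyWeight_mul_sub (c : Finset ι → ℝ) :
    ∑ j, ∑ A ∈ univ.powerset.filter (fun A => j ∉ A),
        shapleyWeight (Fintype.card ι) #A * (c (insert j A) - c A) = c univ - c ∅ := by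
  simp_rw [mul_sub, sum_sub_distrib]
  rw [sum_sum_notMem_insert (fun k B => shapleyWeight (Fintype.card ι) k * c B),
    sum_sum_notMem, ← sum_sub_distrib]
  have hcoef (B : Finset ι) :
      #B * (shapleyWeight (Fintype.card ι) (#B - 1) * c B) -
        ((Fintype.card ι - #B : ℕ) : ℝ) * (shapleyWeight (Fintype.card ι) #B * c B) =
      (if B = univ then c B else 0) - (if B = ∅ then c B else 0) := by
    rw [← mul_assoc, ← mul_assoc, ← sub_mul,
      natCast_mul_shapleyWeight_pred_sub (card_le_univ B)]
    simp only [card_eq_iff_eq_univ, card_eq_zero]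
    split_ifs <;> ring
  simp [hcoef, sum_sub_distrib]

end Coalitions

@[fun_prop]
lemma Measurable.finset_piecewise {α ι : Type*} {X : ι → Type*} [MeasurableSpace α]
    [∀ i, MeasurableSpace (X i)] {B : Finset ι} [∀ j, Decidable (j ∈ B)] {f g : α → ∀ i, X i}
    (hf : Measurable f) (hg : Measurable g) : Measurable fun a => B.piecewise (f a) (g a) := by
  refine measurable_pi_lambda _ fun i => ?_
  by_cases hi : i ∈ B <;> simp only [piecewise, hi, if_true, if_false] <;> fun_prop

lemma Finset.piecewise_piecewise_symmDiff {ι α : Type*} [DecidableEq ι] (B S : Finset ι)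
    (x y : ι → α) :
    B.piecewise (S.piecewise x y) (S.piecewise y x) = (symmDiff B S).piecewise y x := by
  ext i
  by_cases hB : i ∈ B <;> by_cases hS : i ∈ S <;> simp [piecewise, hB, hS, mem_symmDiff]

section Resampling

variable {ι 𝓩 : Type*} [MeasurableSpace 𝓩] [Fintype ι]

lemma measurePreserving_pi_prod_pi_of_coord {𝓨 : Type*} [MeasurableSpace 𝓨]
    (ν : ι → Measure 𝓩) [∀ i, SigmaFinite (ν i)] (ρ : ι → Measure 𝓨) [∀ i, SigmaFinite (ρ i)]
    (φ : ι → 𝓩 × 𝓩 → 𝓨) (hφ : ∀ i, MeasurePreserving (φ i) ((ν i).prod (ν i)) (ρ i)) :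
    MeasurePreserving (fun p i => φ i (p.1 i, p.2 i))
      ((Measure.pi ν).prod (Measure.pi ν)) (Measure.pi ρ) :=
  (measurePreserving_pi _ _ hφ).comp
    ((measurePreserving_arrowProdEquivProdArrow 𝓩 𝓩 ι ν ν).symm _)

variable [DecidableEq ι]

lemma measurePreserving_swap_piecewise (ν : ι → Measure 𝓩) [∀ i, SigmaFinite (ν i)]
    (S : Finset ι) :
    MeasurePreserving (fun p : (ι → 𝓩) × (ι → 𝓩) => (S.piecewise p.2 p.1, S.piecewise p.1 p.2))
      ((Measure.pi ν).prod (Measure.pi ν)) ((Measure.pi ν).prod (Measure.pi ν)) := by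
  convert (measurePreserving_arrowProdEquivProdArrow 𝓩 𝓩 ι ν ν).comp
    (measurePreserving_pi_prod_pi_of_coord ν (fun i => (ν i).prod (ν i))
      (fun i => if i ∈ S then Prod.swap else id) fun i => ?_) using 1
  · ext p i <;> by_cases hi : i ∈ S <;>
      simp [hi, MeasurableEquiv.arrowProdEquivProdArrow, Equiv.arrowProdEquivProdArrow]
  · by_cases hi : i ∈ S <;> simp only [hi, if_true, if_false]
    · exact Measure.measurePreserving_swap
    · exact MeasurePreserving.id _

variable {ν : ι → Measure 𝓩} [∀ i, IsProbabilityMeasure (ν i)]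

lemma measurePreserving_piecewise_snd_fst (B : Finset ι) :
    MeasurePreserving (fun p : (ι → 𝓩) × (ι → 𝓩) => B.piecewise p.2 p.1)
      ((Measure.pi ν).prod (Measure.pi ν)) (Measure.pi ν) := by
  convert measurePreserving_pi_prod_pi_of_coord ν ν
    (fun i => if i ∈ B then Prod.snd else Prod.fst) fun i => ?_ using 1
  · ext p i
    by_cases hi : i ∈ B <;> simp [hi]
  · by_cases hi : i ∈ B <;> simp only [hi, if_true, if_false]
    · exact ⟨measurable_snd, by simp⟩
    · exact ⟨measurable_fst, by simp⟩

lemma integrable_mul_comp_piecewise {f g : (ι → 𝓩) → ℝ} (hf : MemLp f 2 (Measure.pi ν))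
    (hg : MemLp g 2 (Measure.pi ν)) (B C : Finset ι) :
    Integrable (fun p => g (B.piecewise p.2 p.1) * f (C.piecewise p.2 p.1))
      ((Measure.pi ν).prod (Measure.pi ν)) :=
  (hg.comp_measurePreserving (measurePreserving_piecewise_snd_fst B)).integrable_mul
    (hf.comp_measurePreserving (measurePreserving_piecewise_snd_fst C))

lemma integral_mul_comp_piecewise_symmDiff {f g : (ι → 𝓩) → ℝ} (hf : Measurable f)
    (hg : Measurable g) (B C S : Finset ι) :
    ∫ p, g (B.piecewise p.2 p.1) * f (C.piecewise p.2 p.1) ∂(Measure.pi ν).prod (Measure.pi ν) =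
      ∫ p, g ((symmDiff B S).piecewise p.2 p.1) * f ((symmDiff C S).piecewise p.2 p.1)
        ∂(Measure.pi ν).prod (Measure.pi ν) := by
  have hswap := measurePreserving_swap_piecewise ν S
  have hmeas : Measurable fun p : (ι → 𝓩) × (ι → 𝓩) =>
      g ((symmDiff B S).piecewise p.2 p.1) * f ((symmDiff C S).piecewise p.2 p.1) := by
    fun_prop
  conv_rhs => rw [← hswap.map_eq, integral_map hswap.aemeasurable hmeas.aestronglyMeasurable]
  simp only [piecewise_piecewise_symmDiff]
  rw [symmDiff_symmDiff_cancel_right, symmDiff_symmDiff_cancel_right]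

theorem integral_sub_mul_sub_comp_piecewise {f g : (ι → 𝓩) → ℝ} (hf : Measurable f)
    (hg : Measurable g) (hfL2 : MemLp f 2 (Measure.pi ν)) (hgL2 : MemLp g 2 (Measure.pi ν))
    {j : ι} {A : Finset ι} (hj : j ∉ A) :
    ∫ p, (g (Function.update p.1 j (p.2 j)) - g p.1) *
        (f ((insert j A).piecewise p.2 p.1) - f (A.piecewise p.2 p.1))
        ∂(Measure.pi ν).prod (Measure.pi ν) =
      2 * (∫ p, g p.1 * f (A.piecewise p.2 p.1) ∂(Measure.pi ν).prod (Measure.pi ν) -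
        ∫ p, g p.1 * f ((insert j A).piecewise p.2 p.1) ∂(Measure.pi ν).prod (Measure.pi ν)) := by
  have hins : symmDiff (insert j A) {j} = A := by
    ext i; by_cases hi : i = j <;> simp [mem_symmDiff, hi, hj]
  have hdel : symmDiff A {j} = insert j A := by
    ext i; by_cases hi : i = j <;> simp [mem_symmDiff, hi, hj]
  have hint₀ (C : Finset ι) : Integrable (fun p : (ι → 𝓩) × (ι → 𝓩) =>
      g p.1 * f (C.piecewise p.2 p.1)) ((Measure.pi ν).prod (Measure.pi ν)) := by
    simpa using integrable_mul_comp_piecewise hfL2 hgL2 ∅ C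
  have hint₁ (C : Finset ι) : Integrable (fun p : (ι → 𝓩) × (ι → 𝓩) =>
      g (Function.update p.1 j (p.2 j)) * f (C.piecewise p.2 p.1))
      ((Measure.pi ν).prod (Measure.pi ν)) := by
    simpa [piecewise_singleton] using integrable_mul_comp_piecewise hfL2 hgL2 {j} C
  have hswap (C : Finset ι) :
      ∫ p, g (Function.update p.1 j (p.2 j)) * f (C.piecewise p.2 p.1)
        ∂(Measure.pi ν).prod (Measure.pi ν) =
      ∫ p, g p.1 * f ((symmDiff C {j}).piecewise p.2 p.1)
        ∂(Measure.pi ν).prod (Measure.pi ν) := by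
    have h := integral_mul_comp_piecewise_symmDiff (ν := ν) hf hg {j} C {j}
    rw [symmDiff_self, bot_eq_empty] at h
    simpa [piecewise_singleton] using h
  simp only [sub_mul, mul_sub]
  rw [integral_sub, integral_sub, integral_sub, hswap, hswap, hins, hdel]
  · ring
  all_goals first | exact hint₀ _ | exact hint₁ _ | exact (hint₁ _).sub (hint₀ _)

theorem integral_mul_sub_integral_mul_integral_pi {f g : (ι → 𝓩) → ℝ} (hf : Measurable f)
    (hg : Measurable g) (hfL2 : MemLp f 2 (Measure.pi ν)) (hgL2 : MemLp g 2 (Measure.pi ν)) :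
    (∫ x, g x * f x ∂Measure.pi ν) - (∫ x, g x ∂Measure.pi ν) * (∫ x, f x ∂Measure.pi ν) =
      (1 / 2) * ∑ j, ∑ A ∈ univ.powerset.filter (fun A => j ∉ A),
        shapleyWeight (Fintype.card ι) #A *
          ∫ p, (g (Function.update p.1 j (p.2 j)) - g p.1) *
            (f ((insert j A).piecewise p.2 p.1) - f (A.piecewise p.2 p.1))
            ∂(Measure.pi ν).prod (Measure.pi ν) := by
  set c : Finset ι → ℝ := fun B =>
    ∫ p, g p.1 * f (B.piecewise p.2 p.1) ∂(Measure.pi ν).prod (Measure.pi ν)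
  have hc_empty : c ∅ = ∫ x, g x * f x ∂Measure.pi ν := by
    simp [c, integral_fun_fst (fun x => g x * f x)]
  have hc_univ : c univ = (∫ x, g x ∂Measure.pi ν) * (∫ x, f x ∂Measure.pi ν) := by
    simp only [c, piecewise_univ]
    exact integral_prod_mul g f
  have hterm (j : ι) (A : Finset ι) (hA : A ∈ univ.powerset.filter (fun A => j ∉ A)) :
      shapleyWeight (Fintype.card ι) #A *
          ∫ p, (g (Function.update p.1 j (p.2 j)) - g p.1) *
            (f ((insert j A).piecewise p.2 p.1) - f (A.piecewise p.2 p.1))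
            ∂(Measure.pi ν).prod (Measure.pi ν) =
        -2 * (shapleyWeight (Fintype.card ι) #A * (c (insert j A) - c A)) := by
    rw [integral_sub_mul_sub_comp_piecewise hf hg hfL2 hgL2 (mem_filter.mp hA).2]
    ring
  rw [sum_congr rfl fun j _ => sum_congr rfl (hterm j), ← hc_empty, ← hc_univ]
  simp only [← mul_sum, sum_shapleyWeight_mul_sub]
  ring

end Resampling

lemma map_prodMk_eq_pi_prod_pi {Ω ι 𝓩 : Type*} [MeasurableSpace Ω] [MeasurableSpace 𝓩]
    [Fintype ι] {μ : Measure Ω} [IsFiniteMeasure μ] {Z Z' : Ω → ι → 𝓩} (hZ : Measurable Z)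
    (hZ' : Measurable Z')
    (hcoord : iIndepFun (fun i ω => Z ω i) μ) (hindep : IndepFun Z Z' μ)
    (hcopy : μ.map Z = μ.map Z') :
    μ.map (fun ω => (Z ω, Z' ω)) =
      (Measure.pi fun i => μ.map fun ω => Z ω i).prod
        (Measure.pi fun i => μ.map fun ω => Z ω i) := by
  have hlawZ : μ.map Z = Measure.pi fun i => μ.map fun ω => Z ω i :=
    hcoord.map_fun_eq_pi_map fun i => ((measurable_pi_apply i).comp hZ).aemeasurable
  rw [(indepFun_iff_map_prod_eq_prod_map_map hZ.aemeasurable hZ'.aemeasurable).mp hindep, ← hcopy,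
    hlawZ]

/-- Chatterjee's covariance identity: for square-integrable functions `g, f` of a
vector `Z` with independent coordinates, with `Z'` an independent copy,
`Cov(g(Z), f(Z)) = (1/2) ∑_j ∑_{A ⊆ [n], j ∉ A} K_{n,A} E[Δ_j g(Z) · Δ_j f(Z^A)]`
where `K_{n,A} = |A|! (n - |A| - 1)! / n!`, `Z^A` resamples the coordinates in `A`,
and `Δ_j f(Z^A) = f(Z^{A ∪ {j}}) - f(Z^A)`. -/
theorem chatterjee_covariance_identity {Ω 𝓩 : Type*} [MeasurableSpace Ω] [MeasurableSpace 𝓩]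
    (μ : Measure Ω) [IsProbabilityMeasure μ] {n : ℕ}
    (Z Z' : Ω → (Fin n → 𝓩))
    (hZmeas : Measurable Z) (hZ'meas : Measurable Z')
    (hcoordindep : iIndepFun (m := fun _ : Fin n => (inferInstance : MeasurableSpace 𝓩))
      (fun j ω => Z ω j) μ)
    (hindep : IndepFun Z Z' μ)
    (hcopy : Measure.map Z μ = Measure.map Z' μ)
    (f g : (Fin n → 𝓩) → ℝ) (hf : Measurable f) (hg : Measurable g)
    (hfL2 : MemLp (fun ω => f (Z ω)) 2 μ) (hgL2 : MemLp (fun ω => g (Z ω)) 2 μ)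
    -- `ZA A ω` is the vector `Z(ω)` with the coordinates in `A` replaced by those of `Z'(ω)`
    (ZA : Finset (Fin n) → Ω → (Fin n → 𝓩))
    (hZA : ∀ A ω i, ZA A ω i = if i ∈ A then Z' ω i else Z ω i) :
    (∫ ω, g (Z ω) * f (Z ω) ∂μ) - (∫ ω, g (Z ω) ∂μ) * (∫ ω, f (Z ω) ∂μ) =
      (1/2) * ∑ j : Fin n,
        ∑ A ∈ Finset.univ.powerset.filter (fun A : Finset (Fin n) => j ∉ A),
          (((A.card.factorial * (n - A.card - 1).factorial : ℕ) : ℝ) / (n.factorial : ℝ)) *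
            ∫ ω, (g (Function.update (Z ω) j (Z' ω j)) - g (Z ω)) *
                  (f (ZA (insert j A) ω) - f (ZA A ω)) ∂μ := by
  set ν : Fin n → Measure 𝓩 := fun i => μ.map fun ω => Z ω i
  have hZ : ∀ i, Measurable fun ω => Z ω i := fun i => (measurable_pi_apply i).comp hZmeas
  have : ∀ i, IsProbabilityMeasure (ν i) := fun i =>
    Measure.isProbabilityMeasure_map (hZ i).aemeasurable
  have hlawZ : μ.map Z = Measure.pi ν :=
    hcoordindep.map_fun_eq_pi_map fun i => (hZ i).aemeasurable
  have hintZ (F : (Fin n → 𝓩) → ℝ) (hF : Measurable F) :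
      ∫ ω, F (Z ω) ∂μ = ∫ x, F x ∂Measure.pi ν := by
    rw [← hlawZ, integral_map hZmeas.aemeasurable hF.aestronglyMeasurable]
  have hintPair (F : (Fin n → 𝓩) × (Fin n → 𝓩) → ℝ) (hF : Measurable F) :
      ∫ ω, F (Z ω, Z' ω) ∂μ = ∫ p, F p ∂(Measure.pi ν).prod (Measure.pi ν) := by
    rw [← map_prodMk_eq_pi_prod_pi hZmeas hZ'meas hcoordindep hindep hcopy,
      integral_map (hZmeas.prodMk hZ'meas).aemeasurable hF.aestronglyMeasurable]
  have hmemLp (F : (Fin n → 𝓩) → ℝ) (hF : Measurable F)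
      (hFL2 : MemLp (fun ω => F (Z ω)) 2 μ) : MemLp F 2 (Measure.pi ν) := by
    rw [← hlawZ]
    exact (memLp_map_measure_iff hF.aestronglyMeasurable hZmeas.aemeasurable).mpr hFL2
  have hZA' (A : Finset (Fin n)) (ω : Ω) : ZA A ω = A.piecewise (Z' ω) (Z ω) := funext (hZA A ω)
  rw [hintZ (fun x => g x * f x) (hg.mul hf), hintZ g hg, hintZ f hf,
    integral_mul_sub_integral_mul_integral_pi hf hg (hmemLp f hf hfL2) (hmemLp g hg hgL2)]
  refine congrArg _ (sum_congr rfl fun j _ => sum_congr rfl fun A _ => ?_)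
  rw [shapleyWeight, Fintype.card_fin, ← hintPair _ (by fun_prop)]
  simp only [hZA']
end
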